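/- Let μ ∈ k^r with μ ≠ 0 and h ∈ R, and set α = Σ_i μ_i·dx_i/x_i + dh (a closed, 0-final dominant logarithmic 1-form with residual part Σ_i μ_i·dx_i/x_i). Define d_αξ = α ∧ ξ + dξ. Let ρ ∈ ℝ and let η be a logarithmic 1-form with ν_A(d_αη) ≥ ρ. Then η = θ + η̃ where ν_A(η̃) ≥ ρ and θ has the following form: there exists F ∈ R such that, if −μ ∉ ℤ_{≥0}^r, then θ = d_αF; and if −μ ∈ ℤ_{≥0}^r, then there exist an index i₀ with μ_{i₀} ≠ 0, a unit W ∈ R, and λ ∈ k^r such that θ = d_αF + x̃^{−μ}·(Σ_i λ_i·dx_i/x_i), where x̃_{i₀} = W·x_{i₀} and x̃_i = x_i for i ≠ i₀ (so x̃^{−μ} = W^{−μ_{i₀}}·x^{−μ} ∈ R). In all cases θ ∧ dθ = 0. -/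

import Mathlib

/-!
Multiplying by the unit `u = exp (h - h(0))` conjugates `d_α` into the constant-coefficient operator
`d_μ = (Σ μᵢ dxᵢ/xᵢ) ∧ · + d`, and the bound `ν_A ≥ ρ` survives because all weights are nonnegative.
In the frame `dxᵢ/xᵢ, dy_j/y_j` the operator `d_μ` is diagonal on monomials: on `x^a y^b` its
`dxᵢ/xᵢ`-component multiplies by `μᵢ + aᵢ` and its `dy_j/y_j`-component by `b_j`. Below weight `ρ`
the closedness of `d_μ (u η)` says that the coefficients of `u η` at a monomial are proportional to
these eigenvalues, so dividing by any nonzero one produces `F` with `u η ≡ d_μ F`. All eigenvalues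
vanish only at `x^m` with `μ = -m`, which leaves the term `x^m Σ λᵢ dxᵢ/xᵢ`. Conjugating back,
`θ = u⁻¹ (d_μ F + x^m Σ λᵢ dxᵢ/xᵢ)` satisfies `d_α θ = 0`, i.e. `dθ = -α ∧ θ`, whence `θ ∧ dθ = 0`;
and `u⁻¹ = W ^ m_{i₀}` for the unit `W = exp (-(h - h(0)) / m_{i₀})`.
-/

noncomputable section
open MvPowerSeries Classical

section Core

variable {k : Type} [Field k] {σ : Type}

/-- Weighted value of an exponent. -/
def wtG (W : σ → ℝ) (e : σ →₀ ℕ) : ℝ := e.sum fun i m => (m : ℝ) * W i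

/-- Explicit value of a formal power series. -/
def nuG (W : σ → ℝ) (f : MvPowerSeries σ k) : EReal :=
  sInf {v : EReal | ∃ e : σ →₀ ℕ, MvPowerSeries.coeff e f ≠ 0 ∧ v = ((wtG W e : ℝ) : EReal)}

/-- Derivative operators: `x·∂/∂x` for logarithmic variables, `∂/∂y` for plain ones. -/
def DopG (isLog : σ → Bool) (b : σ) (f : MvPowerSeries σ k) : MvPowerSeries σ k :=
  fun e => if isLog b then (e b : k) * MvPowerSeries.coeff e f
    else ((e b : k) + 1) * MvPowerSeries.coeff (e + Finsupp.single b 1) f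

/-- The differential of a function as a logarithmic 1-form. -/
def dFnG (isLog : σ → Bool) (f : MvPowerSeries σ k) : σ → MvPowerSeries σ k :=
  fun b => DopG isLog b f

/-- Explicit value of a logarithmic 1-form. -/
def nu1G (W : σ → ℝ) (ω : σ → MvPowerSeries σ k) : EReal := ⨅ b, nuG W (ω b)

/-- Wedge of two 1-forms, as an alternating 2-tensor. -/
def w2G (α β : σ → MvPowerSeries σ k) : σ → σ → MvPowerSeries σ k :=
  fun a b => α a * β b - α b * β a

/-- Exterior derivative of a 1-form, as an alternating 2-tensor. -/
def dF1G (isLog : σ → Bool) (ω : σ → MvPowerSeries σ k) : σ → σ → MvPowerSeries σ k :=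
  fun a b => DopG isLog a (ω b) - DopG isLog b (ω a)

/-- Explicit value of a 2-form. -/
def nu2G (W : σ → ℝ) (Ω : σ → σ → MvPowerSeries σ k) : EReal := ⨅ a, ⨅ b, nuG W (Ω a b)

/-- Wedge of a 1-form with a 2-form, as an alternating 3-tensor. -/
def w12G (θ : σ → MvPowerSeries σ k) (Ω : σ → σ → MvPowerSeries σ k) :
    σ → σ → σ → MvPowerSeries σ k :=
  fun a b c => θ a * Ω b c - θ b * Ω a c + θ c * Ω a b

/-- Explicit value of a 3-form. -/
def nu3G (W : σ → ℝ) (T : σ → σ → σ → MvPowerSeries σ k) : EReal :=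
  ⨅ a, ⨅ b, ⨅ c, nuG W (T a b c)

/-- `f` is dominant at its own explicit value: the value is realized by a monomial
purely in the distinguished (`isX`) variables. -/
def DomAtG (W : σ → ℝ) (isX : σ → Prop) (f : MvPowerSeries σ k) : Prop :=
  ∃ e : σ →₀ ℕ, (∀ i, ¬ isX i → e i = 0) ∧ MvPowerSeries.coeff e f ≠ 0 ∧
    ((wtG W e : ℝ) : EReal) = nuG W f

/-- `f` is `γ`-final dominant. -/
def FinalDomFnG (W : σ → ℝ) (isX : σ → Prop) (γ : ℝ) (f : MvPowerSeries σ k) : Prop :=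
  nuG W f ≤ (γ : EReal) ∧ DomAtG W isX f

/-- A 1-form is dominant at its own explicit value: realized by a `dx_i/x_i`-coefficient. -/
def Dom1AtG (W : σ → ℝ) (isX : σ → Prop) (ω : σ → MvPowerSeries σ k) : Prop :=
  ∃ i, isX i ∧ nuG W (ω i) = nu1G W ω ∧ DomAtG W isX (ω i)

/-- A 1-form is `γ`-final dominant. -/
def FinalDom1G (W : σ → ℝ) (isX : σ → Prop) (γ : ℝ) (ω : σ → MvPowerSeries σ k) : Prop :=
  nu1G W ω ≤ (γ : EReal) ∧ Dom1AtG W isX ω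

end Core

abbrev Idx (r n : ℕ) := Sum (Fin r) (Fin n)

/-- The constant logarithmic 1-form `Σᵢ μᵢ · dxᵢ/xᵢ`. -/
def cFormM {k : Type} [Field k] {r n : ℕ} (μ : Fin r → k) :
    Idx r n → MvPowerSeries (Idx r n) k :=
  fun b => match b with
  | Sum.inl i => MvPowerSeries.C (σ := Idx r n) (R := k) (μ i)
  | Sum.inr _ => 0

/-- `d_μ f = f·Σ μᵢ dxᵢ/xᵢ + df`. -/
def dMuFn {k : Type} [Field k] {r n : ℕ} (μ : Fin r → k) (f : MvPowerSeries (Idx r n) k) :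
    Idx r n → MvPowerSeries (Idx r n) k :=
  fun b => cFormM μ b * f + DopG (fun s => s.isLeft) b f

/-- `d_μ η = (Σ μᵢ dxᵢ/xᵢ) ∧ η + dη` on 1-forms. -/
def dMu1 {k : Type} [Field k] {r n : ℕ} (μ : Fin r → k)
    (η : Idx r n → MvPowerSeries (Idx r n) k) :
    Idx r n → Idx r n → MvPowerSeries (Idx r n) k :=
  fun a b => w2G (cFormM μ) η a b + dF1G (fun s => s.isLeft) η a b

/-- The monomial `x^m`. -/
def xpowM {k : Type} [Field k] {r n : ℕ} (m : Fin r → ℕ) : MvPowerSeries (Idx r n) k :=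
  MvPowerSeries.monomial (R := k) (Finsupp.equivFunOnFinite.symm (Sum.elim m fun _ => 0)) 1

/-- The logarithmic 1-form `x^m · Σᵢ λᵢ dxᵢ/xᵢ`. -/
def midForm {k : Type} [Field k] {r n : ℕ} (m : Fin r → ℕ) (lam : Fin r → k) :
    Idx r n → MvPowerSeries (Idx r n) k :=
  fun b => match b with
  | Sum.inl i => MvPowerSeries.C (σ := Idx r n) (R := k) (lam i) * xpowM m
  | Sum.inr _ => 0

/-- The closed 1-form `α = Σ μᵢ dxᵢ/xᵢ + dh`. -/
def alphaForm {k : Type} [Field k] {r n : ℕ} (μ : Fin r → k) (h : MvPowerSeries (Idx r n) k) :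
    Idx r n → MvPowerSeries (Idx r n) k :=
  fun b => cFormM μ b + dFnG (fun s => s.isLeft) h b

/-- `d_α F = F·α + dF` on functions. -/
def dAlFn {k : Type} [Field k] {r n : ℕ} (α : Idx r n → MvPowerSeries (Idx r n) k)
    (F : MvPowerSeries (Idx r n) k) : Idx r n → MvPowerSeries (Idx r n) k :=
  fun b => F * α b + DopG (fun s => s.isLeft) b F

/-- `d_α η = α ∧ η + dη` on 1-forms. -/
def dAl1 {k : Type} [Field k] {r n : ℕ} (α η : Idx r n → MvPowerSeries (Idx r n) k) :
    Idx r n → Idx r n → MvPowerSeries (Idx r n) k :=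
  fun a b => w2G α η a b + dF1G (fun s => s.isLeft) η a b

/-- The 1-form `x̃^{m}·(Σ λᵢ dxᵢ/xᵢ)` with `x̃_{i₀} = W·x_{i₀}`, `x̃ᵢ = xᵢ` otherwise,
i.e. with coefficients `λᵢ · W^{m i₀} · x^m`. -/
def midFormW {k : Type} [Field k] {r n : ℕ} (m : Fin r → ℕ) (i₀ : Fin r)
    (W : MvPowerSeries (Idx r n) k) (lam : Fin r → k) :
    Idx r n → MvPowerSeries (Idx r n) k :=
  fun b => match b with
  | Sum.inl i => MvPowerSeries.C (σ := Idx r n) (R := k) (lam i) * (W ^ (m i₀) * xpowM m)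
  | Sum.inr _ => 0


section Derivations

variable {k : Type} [Field k] {σ : Type} (L : σ → Bool)

lemma coeff_X_mul (s : σ) (f : MvPowerSeries σ k) (e : σ →₀ ℕ) :
    coeff e (X s * f) = if e s = 0 then 0 else coeff (e - Finsupp.single s 1) f := by
  by_cases h : e s = 0 <;>
    simp [X_def, coeff_monomial_mul, Finsupp.single_le_iff, Nat.one_le_iff_ne_zero, h]

lemma coeff_X_mul_pderiv (s : σ) (f : MvPowerSeries σ k) (e : σ →₀ ℕ) :
    coeff e (X s * pderiv k s f) = e s * coeff e f := by
  rw [coeff_X_mul, coeff_pderiv]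
  split_ifs with h
  · simp [h]
  · have h1 : 1 ≤ e s := Nat.one_le_iff_ne_zero.mpr h
    rw [tsub_add_cancel_of_le (Finsupp.single_le_iff.mpr h1)]
    simp [Nat.cast_sub h1, mul_comm]

lemma coeff_DopG (b : σ) (f : MvPowerSeries σ k) (e : σ →₀ ℕ) :
    coeff e (DopG L b f) = if L b then (e b : k) * coeff e f
      else ((e b : k) + 1) * coeff (e + Finsupp.single b 1) f := rfl

lemma DopG_eq_pderiv (b : σ) (f : MvPowerSeries σ k) :
    DopG L b f = if L b then X b * pderiv k b f else pderiv k b f := by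
  ext e
  split_ifs with hb
  · rw [coeff_X_mul_pderiv, coeff_DopG, if_pos hb]
  · rw [coeff_DopG, if_neg hb, coeff_pderiv, mul_comm]

def dopDeriv (b : σ) : Derivation k (MvPowerSeries σ k) (MvPowerSeries σ k) :=
  if L b then (X b : MvPowerSeries σ k) • pderiv k b else pderiv k b

@[simp]
lemma dopDeriv_apply (b : σ) (f : MvPowerSeries σ k) : dopDeriv L b f = DopG L b f := by
  rw [DopG_eq_pderiv, dopDeriv]
  split_ifs <;> rfl

lemma DopG_add (b : σ) (f g : MvPowerSeries σ k) :
    DopG L b (f + g) = DopG L b f + DopG L b g := by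
  simp only [← dopDeriv_apply, map_add]

lemma DopG_mul (b : σ) (f g : MvPowerSeries σ k) :
    DopG L b (f * g) = f * DopG L b g + g * DopG L b f := by
  simp only [← dopDeriv_apply, Derivation.leibniz, smul_eq_mul]

lemma DopG_eq_smul_mul_of_pderiv {u h : MvPowerSeries σ k} {c : k}
    (hu : ∀ b, pderiv k b u = c • (u * pderiv k b h)) (b : σ) :
    DopG L b u = c • (u * DopG L b h) := by
  simp only [DopG_eq_pderiv, hu, smul_eq_C_mul]
  split_ifs <;> ring

end Derivations

section Valuation

variable {k : Type} [Field k] {σ : Type} (W : σ → ℝ)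

lemma wtG_add (a b : σ →₀ ℕ) : wtG W (a + b) = wtG W a + wtG W b :=
  Finsupp.sum_add_index' (fun _ => by simp) (fun _ _ _ => by push_cast; ring)

lemma wtG_single (s : σ) (m : ℕ) : wtG W (Finsupp.single s m) = m * W s :=
  Finsupp.sum_single_index (by simp)

lemma wtG_nonneg {W : σ → ℝ} (hW : ∀ s, 0 ≤ W s) (e : σ →₀ ℕ) : 0 ≤ wtG W e :=
  Finset.sum_nonneg fun i _ => mul_nonneg (Nat.cast_nonneg _) (hW i)

lemma le_nuG_iff (ρ : ℝ) (f : MvPowerSeries σ k) :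
    (ρ : EReal) ≤ nuG W f ↔ ∀ e, wtG W e < ρ → coeff e f = 0 := by
  refine ⟨fun hf e he => by_contra fun h0 => ?_, fun hf => le_sInf ?_⟩
  · have := hf.trans (sInf_le ⟨e, h0, rfl⟩)
    exact (EReal.coe_le_coe_iff.mp this).not_gt he
  · rintro _ ⟨e, he, rfl⟩
    exact EReal.coe_le_coe_iff.mpr (not_lt.mp fun hlt => he (hf e hlt))

lemma le_nu1G_iff (ρ : ℝ) (ω : σ → MvPowerSeries σ k) :
    (ρ : EReal) ≤ nu1G W ω ↔ ∀ b e, wtG W e < ρ → coeff e (ω b) = 0 := by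
  simp only [nu1G, le_iInf_iff, le_nuG_iff]

lemma nu1G_le (ω : σ → MvPowerSeries σ k) (b : σ) : nu1G W ω ≤ nuG W (ω b) := iInf_le _ b

lemma nu2G_le (Ω : σ → σ → MvPowerSeries σ k) (a b : σ) : nu2G W Ω ≤ nuG W (Ω a b) :=
  (iInf_le _ a).trans (iInf_le _ b)

variable {W}

lemma coeff_mul_eq_zero_of_le_nuG (hW : ∀ s, 0 ≤ W s) {ρ : ℝ} {f : MvPowerSeries σ k}
    (hf : (ρ : EReal) ≤ nuG W f) (g : MvPowerSeries σ k) {e : σ →₀ ℕ} (he : wtG W e < ρ) :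
    coeff e (g * f) = 0 := by
  classical
  rw [coeff_mul]
  refine Finset.sum_eq_zero fun p hp => ?_
  rw [Finset.HasAntidiagonal.mem_antidiagonal] at hp
  have : wtG W p.2 < ρ := by
    have := wtG_nonneg hW p.1
    rw [← hp, wtG_add] at he
    linarith
  rw [(le_nuG_iff W ρ f).mp hf _ this, mul_zero]

lemma le_nuG_mul (hW : ∀ s, 0 ≤ W s) {ρ : ℝ} {f : MvPowerSeries σ k}
    (hf : (ρ : EReal) ≤ nuG W f) (g : MvPowerSeries σ k) : (ρ : EReal) ≤ nuG W (g * f) :=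
  (le_nuG_iff W ρ _).mpr fun _ => coeff_mul_eq_zero_of_le_nuG hW hf g

lemma le_nu1G_mul (hW : ∀ s, 0 ≤ W s) {ρ : ℝ} {ω : σ → MvPowerSeries σ k}
    (hω : (ρ : EReal) ≤ nu1G W ω) (g : MvPowerSeries σ k) :
    (ρ : EReal) ≤ nu1G W (fun b => g * ω b) :=
  le_iInf fun b => le_nuG_mul hW (hω.trans (nu1G_le W ω b)) g

lemma le_nu2G_mul (hW : ∀ s, 0 ≤ W s) {ρ : ℝ} {Ω : σ → σ → MvPowerSeries σ k}
    (hΩ : (ρ : EReal) ≤ nu2G W Ω) (g : MvPowerSeries σ k) :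
    (ρ : EReal) ≤ nu2G W (fun a b => g * Ω a b) :=
  le_iInf fun a => le_iInf fun b => le_nuG_mul hW (hΩ.trans (nu2G_le W Ω a b)) g

lemma le_nu1G_sub_mul_of_mul_eq_one (hW : ∀ s, 0 ≤ W s) {ρ : ℝ} {u v : MvPowerSeries σ k}
    (huv : u * v = 1) {η θ : σ → MvPowerSeries σ k}
    (h : (ρ : EReal) ≤ nu1G W (fun b => u * η b - θ b)) :
    (ρ : EReal) ≤ nu1G W (fun b => η b - v * θ b) := by
  refine (le_nu1G_mul hW h v).trans_eq (congrArg _ (funext fun b => ?_))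
  linear_combination η b * huv

end Valuation

section Exponential

variable {k : Type} [Field k] {σ : Type} (L : σ → Bool)

lemma coeff_pow_eq_zero_of_degree_lt {g : MvPowerSeries σ k} (hg : constantCoeff g = 0)
    {N : ℕ} {e : σ →₀ ℕ} (he : e.degree < N) : coeff e (g ^ N) = 0 :=
  coeff_of_lt_order ((Nat.cast_lt.mpr he).trans_le (le_order_pow_of_constantCoeff_eq_zero N hg))

def expTrunc (g : MvPowerSeries σ k) (M : ℕ) : MvPowerSeries σ k :=
  ∑ N ∈ Finset.range (M + 1), (N.factorial : k)⁻¹ • g ^ N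

/-- The exponential of a series without constant term: its coefficient at `e` is that of
`expTrunc g M` for any `M ≥ deg e`. -/
def expSeries (g : MvPowerSeries σ k) : MvPowerSeries σ k :=
  fun e => coeff e (expTrunc g e.degree)

lemma coeff_expSeries {g : MvPowerSeries σ k} (hg : constantCoeff g = 0) {e : σ →₀ ℕ} {M : ℕ}
    (hM : e.degree ≤ M) : coeff e (expSeries g) = coeff e (expTrunc g M) := by
  induction M, hM using Nat.le_induction with
  | base => rfl
  | succ M _ ih =>
    rw [ih, expTrunc, expTrunc, Finset.sum_range_succ _ (M + 1), map_add, map_smul,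
      coeff_pow_eq_zero_of_degree_lt hg (by omega), smul_zero, add_zero]

lemma constantCoeff_expSeries (g : MvPowerSeries σ k) : constantCoeff (expSeries g) = 1 := by
  rw [← coeff_zero_eq_constantCoeff_apply]
  show coeff 0 (expTrunc g (Finsupp.degree 0)) = 1
  simp [expTrunc]

lemma coeff_mul_congr {f f' : MvPowerSeries σ k} {e : σ →₀ ℕ}
    (h : ∀ d ≤ e, coeff d f = coeff d f') (g : MvPowerSeries σ k) :
    coeff e (f * g) = coeff e (f' * g) := by
  classical
  simp only [coeff_mul]
  refine Finset.sum_congr rfl fun p hp => ?_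
  rw [h p.1 (Finset.HasAntidiagonal.mem_antidiagonal.mp hp ▸ le_self_add)]

variable [CharZero k]

lemma derivation_expTrunc_succ (D : Derivation k (MvPowerSeries σ k) (MvPowerSeries σ k))
    (g : MvPowerSeries σ k) (M : ℕ) : D (expTrunc g (M + 1)) = expTrunc g M * D g := by
  rw [expTrunc, Finset.sum_range_succ', map_add, map_sum, expTrunc, Finset.sum_mul]
  simp only [pow_zero, Derivation.map_one_eq_zero, Derivation.map_smul,
    Derivation.leibniz_pow, add_tsub_cancel_right, smul_zero, add_zero]
  refine Finset.sum_congr rfl fun N _ => ?_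
  have hN : ((N + 1 : ℕ) : k) ≠ 0 := Nat.cast_ne_zero.mpr N.succ_ne_zero
  rw [Nat.factorial_succ, Nat.cast_mul, mul_inv, mul_comm (((N + 1 : ℕ) : k))⁻¹, mul_smul,
    ← Nat.cast_smul_eq_nsmul k, inv_smul_smul₀ hN, smul_eq_mul, smul_mul_assoc]

lemma pderiv_expSeries {g : MvPowerSeries σ k} (hg : constantCoeff g = 0) (b : σ) :
    pderiv k b (expSeries g) = expSeries g * pderiv k b g := by
  ext e
  have hT (M : ℕ) (d : σ →₀ ℕ) (hd : d.degree ≤ M) :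
      coeff d (expSeries g) = coeff d (expTrunc g M) := coeff_expSeries hg hd
  rw [coeff_pderiv, hT (e.degree + 1) _ (by rw [map_add, Finsupp.degree_single]), ← coeff_pderiv,
    derivation_expTrunc_succ, coeff_mul_congr fun d hd => (hT _ d (Finsupp.degree_mono hd)).symm]

lemma pderiv_expSeries_smul_pow {g : MvPowerSeries σ k} (hg : constantCoeff g = 0) (c : k)
    (b : σ) (m : ℕ) : pderiv k b (expSeries (c • g) ^ m)
      = ((m : k) * c) • (expSeries (c • g) ^ m * pderiv k b g) := by
  have hcg : constantCoeff (c • g) = 0 := by simp [smul_eq_C_mul, hg]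
  induction m with
  | zero => simp
  | succ m ih =>
    rw [pow_succ, Derivation.leibniz, ih, pderiv_expSeries hcg, Derivation.map_smul]
    simp only [smul_eq_C_mul, smul_eq_mul, Nat.cast_succ, map_mul, map_add, map_one]
    ring

lemma expSeries_smul_pow_mul {g : MvPowerSeries σ k} (hg : constantCoeff g = 0) {m : ℕ}
    {c c' : k} (hc : (m : k) * c + c' = 0) : expSeries (c • g) ^ m * expSeries (c' • g) = 1 := by
  refine pderiv.ext (fun b => ?_) (by simp [constantCoeff_expSeries])
  have hE := pderiv_expSeries_smul_pow hg c' b 1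
  rw [pow_one, Nat.cast_one, one_mul] at hE
  have hC : C ((m : k) * c) + C c' = (0 : MvPowerSeries σ k) := by rw [← map_add, hc, map_zero]
  rw [Derivation.leibniz, hE, pderiv_expSeries_smul_pow hg, pderiv_one]
  generalize expSeries (c • g) = E, expSeries (c' • g) = E'
  simp only [smul_eq_C_mul, smul_eq_mul]
  linear_combination (E ^ m * E' * pderiv k b g) * hC

/-- `u = exp h`, `v = exp (-h)` up to constant factors, and `v` has all roots `exp (-h / M)`. -/
theorem exists_exp_and_roots (h : MvPowerSeries σ k) :
    ∃ u v : MvPowerSeries σ k, u * v = 1 ∧ (∀ b, DopG L b u = u * DopG L b h) ∧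
      (∀ b, DopG L b v = -(v * DopG L b h)) ∧ ∀ M : ℕ, M ≠ 0 → ∃ W, IsUnit W ∧ W ^ M = v := by
  set g := h - C (constantCoeff h)
  have hg : constantCoeff g = 0 := by simp [g]
  have hE (c : k) (b : σ) :
      pderiv k b (expSeries (c • g)) = c • (expSeries (c • g) * pderiv k b h) := by
    simpa [g] using pderiv_expSeries_smul_pow hg c b 1
  have hvu := expSeries_smul_pow_mul hg (m := 1) (c := -1) (c' := 1) (by norm_num)
  rw [pow_one] at hvu
  refine ⟨expSeries ((1 : k) • g), expSeries ((-1 : k) • g), by rw [mul_comm, hvu],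
    fun b => ?_, fun b => ?_, fun M hM => ⟨expSeries ((-(M : k)⁻¹) • g), ?_, ?_⟩⟩
  · simpa using DopG_eq_smul_mul_of_pderiv L (hE 1) b
  · simpa using DopG_eq_smul_mul_of_pderiv L (hE (-1)) b
  · simp [isUnit_iff_constantCoeff, constantCoeff_expSeries]
  · have hWu := expSeries_smul_pow_mul hg (m := M) (c := -(M : k)⁻¹) (c' := 1)
      (by field_simp [Nat.cast_ne_zero.mpr hM]; ring)
    exact mul_right_cancel₀ (right_ne_zero_of_mul_eq_one hvu) (hWu.trans hvu.symm)

end Exponential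

section LogFrame

variable {k : Type} [Field k] {r n : ℕ}

/-- Multiplying the `s`-coefficient of a 1-form by `logFactor s` rewrites the form in the frame
`dxᵢ/xᵢ, dy_j/y_j`. -/
def logFactor : Idx r n → MvPowerSeries (Idx r n) k
  | Sum.inl _ => 1
  | Sum.inr j => X (Sum.inr j)

/-- The eigenvalue of `twistedEuler μ s` on the monomial with exponent `e`. -/
def eig (μ : Fin r → k) (e : Idx r n →₀ ℕ) : Idx r n → k
  | Sum.inl i => μ i + e (Sum.inl i)
  | Sum.inr j => e (Sum.inr j)

/-- `μᵢ + xᵢ∂/∂xᵢ` and `y_j∂/∂y_j`. -/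
def twistedEuler (μ : Fin r → k) (s : Idx r n) (f : MvPowerSeries (Idx r n) k) :
    MvPowerSeries (Idx r n) k :=
  cFormM μ s * f + X s * pderiv k s f

variable (μ : Fin r → k)

lemma coeff_twistedEuler (s : Idx r n) (f : MvPowerSeries (Idx r n) k) (e : Idx r n →₀ ℕ) :
    coeff e (twistedEuler μ s f) = eig μ e s * coeff e f := by
  rcases s with i | j
  · simp [twistedEuler, cFormM, eig, coeff_X_mul_pderiv, coeff_C_mul, add_mul]
  · simp [twistedEuler, cFormM, eig, coeff_X_mul_pderiv]

lemma logFactor_ne_zero (s : Idx r n) : (logFactor s : MvPowerSeries (Idx r n) k) ≠ 0 := by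
  rcases s with i | j
  · exact one_ne_zero
  · intro h
    simpa [logFactor] using congrArg (coeff (Finsupp.single (Sum.inr j) 1)) h

lemma logFactor_mul_DopG (s : Idx r n) (f : MvPowerSeries (Idx r n) k) :
    logFactor s * DopG (fun s => s.isLeft) s f = X s * pderiv k s f := by
  rcases s with i | j <;> simp [logFactor, DopG_eq_pderiv]

lemma cFormM_mul_logFactor (s : Idx r n) : cFormM μ s * logFactor s = cFormM μ s := by
  rcases s with i | j <;> simp [logFactor, cFormM]

lemma pderiv_logFactor {s t : Idx r n} (hst : s ≠ t) :
    pderiv k s (logFactor t : MvPowerSeries (Idx r n) k) = 0 := by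
  rcases t with i | j
  · exact pderiv_one
  · exact pderiv_X_of_ne hst.symm

lemma logFactor_mul_dMuFn (F : MvPowerSeries (Idx r n) k) (t : Idx r n) :
    logFactor t * dMuFn μ F t = twistedEuler μ t F := by
  rw [dMuFn, twistedEuler, mul_add, ← mul_assoc, mul_comm (logFactor t), cFormM_mul_logFactor,
    logFactor_mul_DopG]

lemma logFactor_mul_dMu1 (η : Idx r n → MvPowerSeries (Idx r n) k) {s t : Idx r n}
    (hst : s ≠ t) : logFactor s * logFactor t * dMu1 μ η s t
      = twistedEuler μ s (logFactor t * η t) - twistedEuler μ t (logFactor s * η s) := by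
  simp only [twistedEuler, dMu1, w2G, dF1G, Derivation.leibniz, pderiv_logFactor hst,
    pderiv_logFactor (Ne.symm hst), smul_eq_mul, mul_zero, add_zero]
  linear_combination (logFactor t * η t) * cFormM_mul_logFactor μ s
    - (logFactor s * η s) * cFormM_mul_logFactor μ t + logFactor t * logFactor_mul_DopG s (η t)
    - logFactor s * logFactor_mul_DopG t (η s)

lemma coeff_logFactor_mul_dMu1 (η : Idx r n → MvPowerSeries (Idx r n) k) {s t : Idx r n}
    (hst : s ≠ t) (e : Idx r n →₀ ℕ) : coeff e (logFactor s * logFactor t * dMu1 μ η s t)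
      = eig μ e s * coeff e (logFactor t * η t) - eig μ e t * coeff e (logFactor s * η s) := by
  rw [logFactor_mul_dMu1 μ η hst, map_sub, coeff_twistedEuler, coeff_twistedEuler]

lemma dMu1_self (η : Idx r n → MvPowerSeries (Idx r n) k) (s : Idx r n) : dMu1 μ η s s = 0 := by
  simp [dMu1, w2G, dF1G]

lemma dMu1_add (η η' : Idx r n → MvPowerSeries (Idx r n) k) (s t : Idx r n) :
    dMu1 μ (fun b => η b + η' b) s t = dMu1 μ η s t + dMu1 μ η' s t := by
  simp only [dMu1, w2G, dF1G, DopG_add]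
  ring

lemma dMu1_eq_zero_of_eig_mul_comm {η : Idx r n → MvPowerSeries (Idx r n) k}
    (hη : ∀ e s t,
      eig μ e s * coeff e (logFactor t * η t) = eig μ e t * coeff e (logFactor s * η s))
    (s t : Idx r n) : dMu1 μ η s t = 0 := by
  by_cases hst : s = t
  · rw [hst, dMu1_self]
  · have : logFactor s * logFactor t * dMu1 μ η s t = 0 := by
      ext e
      rw [coeff_logFactor_mul_dMu1 μ η hst, hη, sub_self, map_zero]
    exact (mul_eq_zero.mp this).resolve_left
      (mul_ne_zero (logFactor_ne_zero s) (logFactor_ne_zero t))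

lemma dMu1_dMuFn (F : MvPowerSeries (Idx r n) k) (s t : Idx r n) : dMu1 μ (dMuFn μ F) s t = 0 :=
  dMu1_eq_zero_of_eig_mul_comm μ (fun e s t => by
    rw [logFactor_mul_dMuFn, logFactor_mul_dMuFn, coeff_twistedEuler, coeff_twistedEuler]; ring) s t

end LogFrame

section TruncatedPoincare

variable {k : Type} [Field k] {r n : ℕ} (μ : Fin r → k)

lemma eig_mul_coeff_comm_of_le_nu2G {W : Idx r n → ℝ} (hW : ∀ s, 0 ≤ W s) {ρ : ℝ}
    {η : Idx r n → MvPowerSeries (Idx r n) k} (hη : (ρ : EReal) ≤ nu2G W (dMu1 μ η))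
    {e : Idx r n →₀ ℕ} (he : wtG W e < ρ) (s t : Idx r n) :
    eig μ e s * coeff e (logFactor t * η t) = eig μ e t * coeff e (logFactor s * η s) := by
  by_cases hst : s = t
  · rw [hst]
  rw [← sub_eq_zero, ← coeff_logFactor_mul_dMu1 μ η hst]
  exact coeff_mul_eq_zero_of_le_nuG hW (hη.trans (nu2G_le W _ s t)) _ he

lemma coeff_add_single_logFactor_inr (j : Fin n) (f : MvPowerSeries (Idx r n) k)
    (e : Idx r n →₀ ℕ) : coeff (e + Finsupp.single (Sum.inr j) 1) (logFactor (Sum.inr j) * f)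
      = coeff e f := by
  simp [logFactor, coeff_X_mul]

theorem exists_dMuFn_coeff_eq [CharZero k] {W : Idx r n → ℝ} (hW : ∀ s, 0 ≤ W s)
    (hWy : ∀ j, W (Sum.inr j) = 0) {ρ : ℝ} {η : Idx r n → MvPowerSeries (Idx r n) k}
    (hη : (ρ : EReal) ≤ nu2G W (dMu1 μ η)) : ∃ F : MvPowerSeries (Idx r n) k,
      (∀ j e, wtG W e < ρ → coeff e (η (Sum.inr j)) = coeff e (dMuFn μ F (Sum.inr j))) ∧
      ∀ i e, wtG W e < ρ → (∃ s, eig μ e s ≠ 0) →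
        coeff e (η (Sum.inl i)) = coeff e (dMuFn μ F (Sum.inl i)) := by
  classical
  -- read `F` off any component with a nonzero eigenvalue; closedness makes the choice irrelevant
  let F : MvPowerSeries (Idx r n) k := fun e =>
    if h : ∃ s, eig μ e s ≠ 0 then coeff e (logFactor h.choose * η h.choose) / eig μ e h.choose
    else 0
  have hF (e : Idx r n →₀ ℕ) (he : wtG W e < ρ) (hs : ∃ s, eig μ e s ≠ 0) (t : Idx r n) :
      coeff e (logFactor t * η t) = coeff e (logFactor t * dMuFn μ F t) := by
    rw [logFactor_mul_dMuFn, coeff_twistedEuler]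
    change _ = _ * dite _ _ _
    rw [dif_pos hs, mul_div_assoc', eq_div_iff hs.choose_spec]
    exact (mul_comm _ _).trans (eig_mul_coeff_comm_of_le_nu2G μ hW hη he _ t)
  refine ⟨F, fun j e he => ?_, fun i e he hs => by simpa [logFactor] using hF e he hs (Sum.inl i)⟩
  rw [← coeff_add_single_logFactor_inr j (η _), ← coeff_add_single_logFactor_inr j (dMuFn μ F _)]
  refine hF _ ?_ ⟨Sum.inr j, by simpa [eig] using Nat.cast_add_one_ne_zero (e (Sum.inr j))⟩ _
  rwa [wtG_add, wtG_single, hWy, mul_zero, add_zero]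

end TruncatedPoincare

section Resonance

variable {k : Type} [Field k] {r n : ℕ} {μ : Fin r → k}

def xExp (m : Fin r → ℕ) : Idx r n →₀ ℕ := Finsupp.equivFunOnFinite.symm (Sum.elim m fun _ => 0)

lemma exists_eig_ne_zero (hres : ¬∃ m : Fin r → ℕ, ∀ i, μ i = -(m i : k))
    (e : Idx r n →₀ ℕ) : ∃ s, eig μ e s ≠ 0 := by
  by_contra! h
  exact hres ⟨fun i => e (Sum.inl i), fun i => eq_neg_of_add_eq_zero_left (h (Sum.inl i))⟩

lemma coeff_midForm_inl (m : Fin r → ℕ) (lam : Fin r → k) (i : Fin r) (e : Idx r n →₀ ℕ) :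
    coeff e (midForm m lam (Sum.inl i)) = if e = xExp m then lam i else 0 := by
  by_cases he : e = xExp m <;> simp_all [midForm, xpowM, coeff_C_mul, coeff_monomial, xExp]

lemma mul_midForm_eq_midFormW {m : Fin r → ℕ} {i₀ : Fin r} {W v : MvPowerSeries (Idx r n) k}
    (hWv : W ^ m i₀ = v) (lam : Fin r → k) (b : Idx r n) :
    v * midForm m lam b = midFormW m i₀ W lam b := by
  rcases b with i | j
  · simp only [midForm, midFormW, hWv]
    ring
  · simp [midForm, midFormW]

variable [CharZero k]

lemma eig_eq_zero_iff {m : Fin r → ℕ} (hm : ∀ i, μ i = -(m i : k)) {e : Idx r n →₀ ℕ} :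
    (∀ s, eig μ e s = 0) ↔ e = xExp m := by
  constructor
  · intro h
    ext (i | j)
    · have := h (Sum.inl i)
      simp only [eig, hm, neg_add_eq_zero, Nat.cast_inj] at this
      simp [xExp, this]
    · simpa [eig, xExp] using h (Sum.inr j)
  · rintro rfl (i | j) <;> simp [eig, hm, xExp]

lemma dMu1_midForm {m : Fin r → ℕ} (hm : ∀ i, μ i = -(m i : k)) (lam : Fin r → k)
    (s t : Idx r n) : dMu1 μ (midForm m lam) s t = 0 := by
  refine dMu1_eq_zero_of_eig_mul_comm μ (fun e s t => ?_) s t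
  by_cases he : e = xExp m
  · rw [(eig_eq_zero_iff hm).mpr he s, (eig_eq_zero_iff hm).mpr he t, zero_mul, zero_mul]
  · have h0 (s : Idx r n) : coeff e (logFactor s * midForm m lam s) = 0 := by
      rcases s with i | j
      · simp [logFactor, coeff_midForm_inl, he]
      · simp [midForm]
    rw [h0, h0, mul_zero, mul_zero]

variable {W : Idx r n → ℝ} {ρ : ℝ} {η : Idx r n → MvPowerSeries (Idx r n) k}

theorem exists_dMuFn_approx_of_nonresonant (hW : ∀ s, 0 ≤ W s) (hWy : ∀ j, W (Sum.inr j) = 0)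
    (hres : ¬∃ m : Fin r → ℕ, ∀ i, μ i = -(m i : k)) (hη : (ρ : EReal) ≤ nu2G W (dMu1 μ η)) :
    ∃ F, (ρ : EReal) ≤ nu1G W (fun b => η b - dMuFn μ F b) := by
  obtain ⟨F, hy, hx⟩ := exists_dMuFn_coeff_eq μ hW hWy hη
  refine ⟨F, (le_nu1G_iff W ρ _).mpr ?_⟩
  rintro (i | j) e he
  · rw [map_sub, hx i e he (exists_eig_ne_zero hres e), sub_self]
  · rw [map_sub, hy j e he, sub_self]

theorem exists_dMuFn_approx_of_resonant (hW : ∀ s, 0 ≤ W s) (hWy : ∀ j, W (Sum.inr j) = 0)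
    {m : Fin r → ℕ} (hm : ∀ i, μ i = -(m i : k)) (hη : (ρ : EReal) ≤ nu2G W (dMu1 μ η)) :
    ∃ F, (ρ : EReal) ≤ nu1G W (fun b =>
      η b - (dMuFn μ F b + midForm m (fun i => coeff (xExp m) (η (Sum.inl i))) b)) := by
  obtain ⟨F, hy, hx⟩ := exists_dMuFn_coeff_eq μ hW hWy hη
  refine ⟨F, (le_nu1G_iff W ρ _).mpr ?_⟩
  rintro (i | j) e he
  · rw [map_sub, map_add, coeff_midForm_inl]
    by_cases hc : e = xExp m
    · have hF : coeff e (dMuFn μ F (Sum.inl i)) = 0 := by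
        simpa [logFactor, coeff_twistedEuler, (eig_eq_zero_iff hm).mpr hc]
          using congrArg (coeff e) (logFactor_mul_dMuFn μ F (Sum.inl i))
      rw [hF, if_pos hc, hc, zero_add, sub_self]
    · rw [hx i e he (not_forall.mp (mt (eig_eq_zero_iff hm).mp hc)), if_neg hc, add_zero, sub_self]
  · rw [map_sub, map_add, ← hy j e he]
    simp [midForm]

end Resonance

section Conjugation

variable {k : Type} [Field k] {r n : ℕ} (μ : Fin r → k) (h : MvPowerSeries (Idx r n) k)

lemma dMu1_mul_of_DopG {u : MvPowerSeries (Idx r n) k}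
    (hu : ∀ b, DopG (fun s => s.isLeft) b u = u * DopG (fun s => s.isLeft) b h)
    (η : Idx r n → MvPowerSeries (Idx r n) k) (a b : Idx r n) :
    dMu1 μ (fun s => u * η s) a b = u * dAl1 (alphaForm μ h) η a b := by
  simp only [dMu1, dAl1, w2G, dF1G, alphaForm, dFnG, DopG_mul, hu]
  ring

lemma dAl1_mul_of_DopG {v : MvPowerSeries (Idx r n) k}
    (hv : ∀ b, DopG (fun s => s.isLeft) b v = -(v * DopG (fun s => s.isLeft) b h))
    (θ : Idx r n → MvPowerSeries (Idx r n) k) (a b : Idx r n) :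
    dAl1 (alphaForm μ h) (fun s => v * θ s) a b = v * dMu1 μ θ a b := by
  simp only [dMu1, dAl1, w2G, dF1G, alphaForm, dFnG, DopG_mul, hv]
  ring

lemma dAlFn_mul_of_DopG {v : MvPowerSeries (Idx r n) k}
    (hv : ∀ b, DopG (fun s => s.isLeft) b v = -(v * DopG (fun s => s.isLeft) b h))
    (F : MvPowerSeries (Idx r n) k) (b : Idx r n) :
    dAlFn (alphaForm μ h) (v * F) b = v * dMuFn μ F b := by
  simp only [dAlFn, dMuFn, alphaForm, dFnG, DopG_mul, hv]
  ring

/-- `d_α θ = 0` gives `dθ = -α ∧ θ`, so `θ ∧ dθ = -θ ∧ α ∧ θ = 0`. -/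
lemma w12G_dF1G_eq_zero_of_dAl1 {α θ : Idx r n → MvPowerSeries (Idx r n) k}
    (hθ : ∀ a b, dAl1 α θ a b = 0) (a b c : Idx r n) :
    w12G θ (dF1G (fun s => s.isLeft) θ) a b c = 0 := by
  have hd (a b : Idx r n) : dF1G (fun s => s.isLeft) θ a b = -w2G α θ a b :=
    eq_neg_of_add_eq_zero_right (hθ a b)
  simp only [w12G, hd, w2G]
  ring

end Conjugation

theorem statement5_general {k : Type} [Field k] [CharZero k] {r n : ℕ}
    (w : Fin r → ℝ) (hw : ∀ i, 0 < w i)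
    (μ : Fin r → k) (hμ : μ ≠ 0) (h : MvPowerSeries (Idx r n) k) (ρ : ℝ)
    (η : Idx r n → MvPowerSeries (Idx r n) k)
    (hint : (ρ : EReal) ≤ nu2G (Sum.elim w fun _ => (0:ℝ)) (dAl1 (alphaForm μ h) η)) :
    ∃ (θ ηt : Idx r n → MvPowerSeries (Idx r n) k) (F : MvPowerSeries (Idx r n) k),
      (∀ b, η b = θ b + ηt b) ∧
      (ρ : EReal) ≤ nu1G (Sum.elim w fun _ => (0:ℝ)) ηt ∧
      (∀ a b c, w12G θ (dF1G (fun s => s.isLeft) θ) a b c = 0) ∧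
      ((¬ ∃ m : Fin r → ℕ, ∀ i, μ i = - ((m i : ℕ) : k)) →
        ∀ b, θ b = dAlFn (alphaForm μ h) F b) ∧
      (∀ m : Fin r → ℕ, (∀ i, μ i = - ((m i : ℕ) : k)) →
        ∃ (i₀ : Fin r) (W : MvPowerSeries (Idx r n) k) (lam : Fin r → k),
          m i₀ ≠ 0 ∧ IsUnit W ∧
          ∀ b, θ b = dAlFn (alphaForm μ h) F b + midFormW m i₀ W lam b) := by
  have hW : ∀ s : Idx r n, 0 ≤ (Sum.elim w fun _ => (0:ℝ)) s := by
    rintro (i | j)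
    exacts [(hw i).le, le_rfl]
  obtain ⟨u, v, huv, hu, hv, hroot⟩ := exists_exp_and_roots (fun s : Idx r n => s.isLeft) h
  have hη : (ρ : EReal) ≤ nu2G (Sum.elim w fun _ => (0:ℝ)) (dMu1 μ fun s => u * η s) := by
    refine (le_nu2G_mul hW hint u).trans_eq (congrArg _ ?_)
    exact funext₂ fun a b => (dMu1_mul_of_DopG μ h hu η a b).symm
  have hintegrable {θ : Idx r n → MvPowerSeries (Idx r n) k} (hθ : ∀ a b, dMu1 μ θ a b = 0) :=
    w12G_dF1G_eq_zero_of_dAl1 fun a b => by rw [dAl1_mul_of_DopG μ h hv, hθ, mul_zero]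
  by_cases hres : ∃ m : Fin r → ℕ, ∀ i, μ i = -(m i : k)
  · obtain ⟨m, hm⟩ := hres
    obtain ⟨F, hF⟩ := exists_dMuFn_approx_of_resonant hW (fun _ => rfl) hm hη
    obtain ⟨i₀, hi₀⟩ := Function.ne_iff.mp hμ
    have hmi₀ : m i₀ ≠ 0 := fun h0 => hi₀ (by simp [hm, h0])
    obtain ⟨W, hWunit, hWv⟩ := hroot _ hmi₀
    set lam := fun i => coeff (xExp m) (u * η (Sum.inl i))
    refine ⟨fun b => v * (dMuFn μ F b + midForm m lam b), _, v * F,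
      fun b => (add_sub_cancel _ _).symm, le_nu1G_sub_mul_of_mul_eq_one hW huv hF,
      hintegrable fun a b => by rw [dMu1_add, dMu1_dMuFn, dMu1_midForm hm, add_zero],
      fun hn => absurd ⟨m, hm⟩ hn, fun m' hm' => ?_⟩
    obtain rfl : m' = m := funext fun i => by exact_mod_cast neg_inj.mp ((hm' i).symm.trans (hm i))
    exact ⟨i₀, W, lam, hmi₀, hWunit, fun b => by
      rw [dAlFn_mul_of_DopG μ h hv, ← mul_midForm_eq_midFormW hWv, ← mul_add]⟩
  · obtain ⟨F, hF⟩ := exists_dMuFn_approx_of_nonresonant hW (fun _ => rfl) hres hη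
    exact ⟨fun b => v * dMuFn μ F b, _, v * F, fun b => (add_sub_cancel _ _).symm,
      le_nu1G_sub_mul_of_mul_eq_one hW huv hF,
      hintegrable (dMu1_dMuFn μ F), fun _ b => (dAlFn_mul_of_DopG μ h hv F b).symm,
      fun m hm => absurd ⟨m, hm⟩ hres⟩

/-- truncated Poincaré lemma with respect to a closed `0`-final dominant
form `α = Σ μᵢ dxᵢ/xᵢ + dh` (`μ ≠ 0`): if `ν_A(d_α η) ≥ ρ` then `η = θ + η̃`,
`ν_A(η̃) ≥ ρ`, `θ ∧ dθ = 0`, and `θ` has the indicated normal form. -/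
theorem statement5 {k : Type} [Field k] [CharZero k] {r n : ℕ} (hr : 0 < r)
    (w : Fin r → ℝ) (hw : ∀ i, 0 < w i) (hind : LinearIndependent ℚ w)
    (μ : Fin r → k) (hμ : μ ≠ 0) (h : MvPowerSeries (Idx r n) k) (ρ : ℝ)
    (η : Idx r n → MvPowerSeries (Idx r n) k)
    (hint : (ρ : EReal) ≤ nu2G (Sum.elim w fun _ => (0:ℝ)) (dAl1 (alphaForm μ h) η)) :
    ∃ (θ ηt : Idx r n → MvPowerSeries (Idx r n) k) (F : MvPowerSeries (Idx r n) k),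
      (∀ b, η b = θ b + ηt b) ∧
      (ρ : EReal) ≤ nu1G (Sum.elim w fun _ => (0:ℝ)) ηt ∧
      (∀ a b c, w12G θ (dF1G (fun s => s.isLeft) θ) a b c = 0) ∧
      ((¬ ∃ m : Fin r → ℕ, ∀ i, μ i = - ((m i : ℕ) : k)) →
        ∀ b, θ b = dAlFn (alphaForm μ h) F b) ∧
      (∀ m : Fin r → ℕ, (∀ i, μ i = - ((m i : ℕ) : k)) →
        ∃ (i₀ : Fin r) (W : MvPowerSeries (Idx r n) k) (lam : Fin r → k),
          m i₀ ≠ 0 ∧ IsUnit W ∧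
          ∀ b, θ b = dAlFn (alphaForm μ h) F b + midFormW m i₀ W lam b) :=
  statement5_general w hw μ hμ h ρ η hint
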